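/- If a permutation π of length n has a distant inverse-descent, then the permutation ζ_n contains a subsequence order-isomorphic to π, where ζ_n is the permutation obtained from the restriction z_n of the first n runs of the infinite zigzag word to {1,...,n} by breaking all ties between equal letters decreasingly. -/

import Mathlib

/-- `w` is a permutation of length `n`: a word on `{1,...,n}` with each letter occurring once. -/
def IsPermWord (n : Nat) (w : List Nat) : Prop :=
  w.length = n ∧ w.Nodup ∧ ∀ x ∈ w, 1 ≤ x ∧ x ≤ n

/-- Two words of the same length are order-isomorphic. -/
def OrdIso (u v : List Nat) : Prop :=
  u.length = v.length ∧ ∀ i j, i < u.length → j < u.length →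
    (u.getD i 0 < u.getD j 0 ↔ v.getD i 0 < v.getD j 0)

/-- Ascending run of odd letters `1,3,5,...` restricted to letters `≤ B`. -/
def ascRun (B : Nat) : List Nat := (List.range (B + 1)).filter (fun x => x % 2 == 1)

/-- Descending run of even letters `...,6,4,2` restricted to letters `≤ B`. -/
def descRun (B : Nat) : List Nat :=
  ((List.range (B + 1)).filter (fun x => x % 2 == 0 && x != 0)).reverse

/-- The first `n` runs of the infinite zigzag word, restricted to letters `≤ B`. -/
def zigzag (B n : Nat) : List Nat :=
  (List.range n).flatMap (fun k => if k % 2 = 0 then ascRun B else descRun B)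

/-- Build a layered word from a list of layer lengths, starting above value `a`:
a layer of length `k` is the decreasing run `a+k, ..., a+2, a+1`. -/
def layeredFrom : Nat → List Nat → List Nat
  | _, [] => []
  | a, k :: ks => ((List.range k).map (fun i => a + k - i)) ++ layeredFrom (a + k) ks

/-- A permutation (word) is layered if it is a direct sum of nonempty decreasing
permutations. -/
def IsLayered (w : List Nat) : Prop :=
  ∃ ls : List Nat, (∀ l ∈ ls, 0 < l) ∧ w = layeredFrom 0 ls

/-- `π` has a distant inverse-descent: indices j, k with k ≥ j + 2 and π(j) = π(k) + 1. -/
def HasDistantInvDesc (p : List Nat) : Prop :=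
  ∃ j k, j + 2 ≤ k ∧ k < p.length ∧ p.getD j 0 = p.getD k 0 + 1

/-- The restriction of the first n runs of the infinite zigzag word to {1,...,n}. -/
def zWord (n : Nat) : List Nat := zigzag n n

/-- `z` is a tie-broken version of `zWord n`: a permutation of the same length in which
strict comparisons of `zWord n` are preserved and equal letters become decreasing. -/
def IsZeta (n : Nat) (z : List Nat) : Prop :=
  IsPermWord (zWord n).length z ∧
    ∀ i j, i < j → j < (zWord n).length →
      (((zWord n).getD i 0 < (zWord n).getD j 0 → z.getD i 0 < z.getD j 0) ∧
       ((zWord n).getD j 0 ≤ (zWord n).getD i 0 → z.getD j 0 < z.getD i 0))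

namespace ZetaAux

local infixl:50 " <+ " => List.Sublist

def oddsGT (B y : Nat) : List Nat :=
  (List.range (B + 1)).filter (fun t => t % 2 == 1 && decide (y < t))

def evensLT (B y : Nat) : List Nat :=
  ((List.range (B + 1)).filter (fun t => (t % 2 == 0 && t != 0) && decide (t < y))).reverse

def zz (B : Nat) : Nat → Bool → List Nat
  | 0, _ => []
  | m + 1, b => (if b then ascRun B else descRun B) ++ zz B m (!b)

lemma filter_ge_eq_cons (p : Nat → Bool) {x L : Nat} (hx : x < L) (hp : p x = true) :
    (List.range L).filter (fun t => p t && decide (x ≤ t)) =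
      x :: (List.range L).filter (fun t => p t && decide (x < t)) := by
  induction L with
  | zero => omega
  | succ L IH =>
    rw [List.range_succ, List.filter_append, List.filter_append]
    rcases Nat.lt_or_ge x L with h | h
    · rw [IH h]; simp [List.filter_singleton, Nat.le_of_lt h, h]
    · have hxL : x = L := by omega
      subst hxL
      have h1 : (List.range x).filter (fun t => p t && decide (x ≤ t)) = [] := by
        rw [List.filter_eq_nil_iff]
        intro t ht
        have : t < x := List.mem_range.mp ht
        simp [Nat.not_le.mpr this]
      have h2 : (List.range x).filter (fun t => p t && decide (x < t)) = [] := by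
        rw [List.filter_eq_nil_iff]
        intro t ht
        have : t < x := List.mem_range.mp ht
        simp; omega
      simp [h1, h2, hp, List.filter]

lemma filter_le_eq_append (p : Nat → Bool) {x L : Nat} (hx : x < L) (hp : p x = true) :
    (List.range L).filter (fun t => p t && decide (t ≤ x)) =
      (List.range L).filter (fun t => p t && decide (t < x)) ++ [x] := by
  induction L with
  | zero => omega
  | succ L IH =>
    rw [List.range_succ, List.filter_append, List.filter_append]
    rcases Nat.lt_or_ge x L with h | h
    · rw [IH h]
      have e1 : List.filter (fun t => p t && decide (t ≤ x)) [L] = [] := by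
        simp; omega
      have e2 : List.filter (fun t => p t && decide (t < x)) [L] = [] := by
        simp; omega
      rw [e1, e2]; simp
    · have hxL : x = L := by omega
      subst hxL
      have e0 : (List.range x).filter (fun t => p t && decide (t ≤ x)) =
          (List.range x).filter (fun t => p t && decide (t < x)) := by
        apply List.filter_congr
        intro t ht
        have : t < x := List.mem_range.mp ht
        simp [Nat.le_of_lt this, this]
      rw [e0]
      have e1 : List.filter (fun t => p t && decide (t ≤ x)) [x] = [x] := by
        simp [hp]
      have e2 : List.filter (fun t => p t && decide (t < x)) [x] = [] := by
        simp
      rw [e1, e2]; simp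

lemma oddsGT_zero (B : Nat) : oddsGT B 0 = ascRun B := by
  unfold oddsGT ascRun
  apply List.filter_congr
  intro t _
  rcases Nat.eq_zero_or_pos t with h | h
  · subst h; simp
  · simp [h]

lemma evensLT_top (B : Nat) : evensLT B (B + 1) = descRun B := by
  unfold evensLT descRun
  congr 1
  apply List.filter_congr
  intro t ht
  have : t < B + 1 := List.mem_range.mp ht
  simp [this]

lemma cons_oddsGT_sublist {B x y : Nat} (hx : x % 2 = 1) (hyx : y < x) (hxB : x ≤ B) :
    x :: oddsGT B x <+ oddsGT B y := by
  have h1 : (List.range (B + 1)).filter (fun t => (t % 2 == 1) && decide (x ≤ t)) =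
      x :: oddsGT B x :=
    filter_ge_eq_cons (fun t => t % 2 == 1) (by omega) (by simp [hx])
  rw [← h1]
  exact List.monotone_filter_right _ (fun a h => by
    simp only [Bool.and_eq_true, beq_iff_eq, decide_eq_true_eq] at h ⊢
    exact ⟨h.1, by omega⟩)

lemma cons_evensLT_sublist {B x y : Nat} (hx : x % 2 = 0) (hx0 : 1 ≤ x) (hxB : x ≤ B)
    (hxy : x < y) : x :: evensLT B x <+ evensLT B y := by
  unfold evensLT
  have h1 : x :: ((List.range (B + 1)).filter
      (fun t => (t % 2 == 0 && t != 0) && decide (t < x))).reverse =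
      ((List.range (B + 1)).filter
        (fun t => (t % 2 == 0 && t != 0) && decide (t ≤ x))).reverse := by
    rw [filter_le_eq_append (fun t => t % 2 == 0 && t != 0) (by omega)
      (by simp [hx]; omega), List.reverse_append]
    rfl
  rw [h1]
  apply List.Sublist.reverse
  exact List.monotone_filter_right _ (fun a h => by
    simp only [Bool.and_eq_true, beq_iff_eq, decide_eq_true_eq] at h ⊢
    exact ⟨h.1, by omega⟩)

lemma zigzag_eq_zz (B n : Nat) : zigzag B n = zz B n true := by
  have key : ∀ (m a : Nat),
      (List.range m).flatMap (fun k => if (a + k) % 2 = 0 then ascRun B else descRun B) =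
        zz B m (decide (a % 2 = 0)) := by
    intro m
    induction m with
    | zero => intro a; simp [zz]
    | succ m IH =>
      intro a
      rw [List.range_succ_eq_map, List.flatMap_cons, List.flatMap_map]
      have e1 : (fun k => if (a + k.succ) % 2 = 0 then ascRun B else descRun B) =
          (fun k => if ((a + 1) + k) % 2 = 0 then ascRun B else descRun B) := by
        funext k
        have : a + k.succ = a + 1 + k := by omega
        rw [this]
      rw [e1, IH (a + 1)]
      show (if (a + 0) % 2 = 0 then ascRun B else descRun B) ++ _ = zz B (m + 1) _
      rcases Nat.mod_two_eq_zero_or_one a with h | h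
      · have h1 : (a + 1) % 2 = 1 := by omega
        have h0 : (a + 0) % 2 = 0 := by omega
        simp [zz, h, h1, h0]
      · have h1 : (a + 1) % 2 = 0 := by omega
        have h0 : (a + 0) % 2 = 1 := by omega
        simp [zz, h, h1, h0]
  have := key n 0
  simpa [zigzag] using this

def cost : Bool → Nat → List Nat → Nat
  | _, _, [] => 0
  | true, y, x :: u =>
      if x % 2 = 1 then (if y < x then cost true x u else 2 + cost true x u)
      else 1 + cost false x u
  | false, y, x :: u =>
      if x % 2 = 0 then (if x < y then cost false x u else 2 + cost false x u)
      else 1 + cost true x u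

lemma embed (B : Nat) : ∀ (u : List Nat) (b : Bool) (y m : Nat),
    (∀ x ∈ u, 1 ≤ x ∧ x ≤ B) → cost b y u ≤ m →
    u <+ (if b then oddsGT B y else evensLT B y) ++ zz B m (!b) := by
  intro u
  induction u with
  | nil => intro b y m _ _; exact List.nil_sublist _
  | cons x u IH =>
    intro b y m hb hc
    obtain ⟨hx1, hxB⟩ := hb x (by simp)
    have hb' : ∀ t ∈ u, 1 ≤ t ∧ t ≤ B := fun t ht => hb t (List.mem_cons_of_mem _ ht)
    cases b with
    | true =>
      rcases Nat.mod_two_eq_zero_or_one x with hpar | hpar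
      · -- x even : jump to next (descending) run
        have hc' : 1 + cost false x u ≤ m := by
          simpa [cost, hpar] using hc
        obtain ⟨m', rfl⟩ : ∃ m', m = m' + 1 := ⟨m - 1, by omega⟩
        have h2 := IH false x m' hb' (by omega)
        simp only [if_neg (Bool.false_ne_true), Bool.not_false] at h2
        have h3 : x :: u <+ descRun B ++ zz B m' true := by
          have h4 : x :: u <+ (x :: evensLT B x) ++ zz B m' true := h2.cons₂ x
          have h5 : x :: evensLT B x <+ descRun B := by
            rw [← evensLT_top B]
            exact cons_evensLT_sublist hpar hx1 hxB (by omega)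
          exact h4.trans (h5.append_right _)
        have h6 : x :: u <+ zz B (m' + 1) false := by
          show x :: u <+ (if false then ascRun B else descRun B) ++ zz B m' (!false)
          simpa using h3
        simp only [if_pos rfl, Bool.not_true]
        exact h6.trans (List.sublist_append_right _ _)
      · by_cases hord : y < x
        · -- fits in current ascending run
          have hc' : cost true x u ≤ m := by simpa [cost, hpar, hord] using hc
          have h2 := IH true x m hb' hc'
          simp only [if_pos rfl, Bool.not_true] at h2 ⊢
          have h4 : x :: u <+ (x :: oddsGT B x) ++ zz B m false := h2.cons₂ x
          exact h4.trans ((cons_oddsGT_sublist hpar hord hxB).append_right _)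
        · -- skip two runs
          have hc' : 2 + cost true x u ≤ m := by simpa [cost, hpar, hord] using hc
          obtain ⟨m', rfl⟩ : ∃ m', m = m' + 2 := ⟨m - 2, by omega⟩
          have h2 := IH true x m' hb' (by omega)
          simp only [if_pos rfl, Bool.not_true] at h2
          have h4 : x :: u <+ (x :: oddsGT B x) ++ zz B m' false := h2.cons₂ x
          have h5 : x :: u <+ ascRun B ++ zz B m' false := by
            have := cons_oddsGT_sublist hpar (show 0 < x by omega) hxB
            rw [oddsGT_zero] at this
            exact h4.trans (this.append_right _)
          have h6 : x :: u <+ zz B (m' + 2) false := by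
            show x :: u <+ (if false then ascRun B else descRun B) ++ zz B (m' + 1) (!false)
            have h7 : x :: u <+ zz B (m' + 1) true := by
              show x :: u <+ (if true then ascRun B else descRun B) ++ zz B m' (!true)
              simpa using h5
            exact h7.trans (by simpa using List.sublist_append_right (descRun B) _)
          simp only [if_pos rfl, Bool.not_true]
          exact h6.trans (List.sublist_append_right _ _)
    | false =>
      rcases Nat.mod_two_eq_zero_or_one x with hpar | hpar
      · by_cases hord : x < y
        · have hc' : cost false x u ≤ m := by simpa [cost, hpar, hord] using hc
          have h2 := IH false x m hb' hc'
          simp only [if_neg (Bool.false_ne_true), Bool.not_false] at h2 ⊢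
          have h4 : x :: u <+ (x :: evensLT B x) ++ zz B m true := h2.cons₂ x
          exact h4.trans ((cons_evensLT_sublist hpar hx1 hxB hord).append_right _)
        · have hc' : 2 + cost false x u ≤ m := by simpa [cost, hpar, hord] using hc
          obtain ⟨m', rfl⟩ : ∃ m', m = m' + 2 := ⟨m - 2, by omega⟩
          have h2 := IH false x m' hb' (by omega)
          simp only [if_neg (Bool.false_ne_true), Bool.not_false] at h2
          have h4 : x :: u <+ (x :: evensLT B x) ++ zz B m' true := h2.cons₂ x
          have h5 : x :: u <+ descRun B ++ zz B m' true := by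
            have h5' : x :: evensLT B x <+ descRun B := by
              rw [← evensLT_top B]
              exact cons_evensLT_sublist hpar hx1 hxB (by omega)
            exact h4.trans (h5'.append_right _)
          have h6 : x :: u <+ zz B (m' + 2) true := by
            show x :: u <+ (if true then ascRun B else descRun B) ++ zz B (m' + 1) (!true)
            have h7 : x :: u <+ zz B (m' + 1) false := by
              show x :: u <+ (if false then ascRun B else descRun B) ++ zz B m' (!false)
              simpa using h5
            exact h7.trans (by simpa using List.sublist_append_right (ascRun B) _)
          simp only [if_neg (Bool.false_ne_true), Bool.not_false]
          exact h6.trans (List.sublist_append_right _ _)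
      · -- x odd : jump to next ascending run
        have hc' : 1 + cost true x u ≤ m := by simpa [cost, hpar] using hc
        obtain ⟨m', rfl⟩ : ∃ m', m = m' + 1 := ⟨m - 1, by omega⟩
        have h2 := IH true x m' hb' (by omega)
        simp only [if_pos rfl, Bool.not_true] at h2
        have h4 : x :: u <+ (x :: oddsGT B x) ++ zz B m' false := h2.cons₂ x
        have h5 : x :: u <+ ascRun B ++ zz B m' false := by
          have h5' := cons_oddsGT_sublist hpar (show 0 < x by omega) hxB
          rw [oddsGT_zero] at h5'
          exact h4.trans (h5'.append_right _)
        have h6 : x :: u <+ zz B (m' + 1) true := by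
          show x :: u <+ (if true then ascRun B else descRun B) ++ zz B m' (!true)
          simpa using h5
        simp only [if_neg (Bool.false_ne_true), Bool.not_false]
        exact h6.trans (List.sublist_append_right _ _)

def costStep (b : Bool) (y x : Nat) : Nat :=
  if b then (if x % 2 = 1 then (if y < x then 0 else 2) else 1)
  else (if x % 2 = 0 then (if x < y then 0 else 2) else 1)

lemma cost_cons (b : Bool) (y x : Nat) (u : List Nat) :
    cost b y (x :: u) = costStep b y x + cost (decide (x % 2 = 1)) x u := by
  cases b <;> rcases Nat.mod_two_eq_zero_or_one x with h | h <;>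
    simp [cost, costStep, h] <;> split_ifs <;> simp [Nat.add_comm]

lemma cost_sum (B : Nat) (u : List Nat) : ∀ x : Nat, List.Chain' (· ≠ ·) (x :: u) →
    cost (decide (x % 2 = 1)) x u +
      cost (decide ((x + 1) % 2 = 1)) (x + 1) (u.map (· + 1)) ≤ 2 * u.length := by
  induction u with
  | nil => intro x _; simp [cost]
  | cons t u IH =>
    intro x hch
    have hxt : x ≠ t := (List.isChain_cons_cons.mp hch).1
    have hch' : List.Chain' (· ≠ ·) (t :: u) := (List.isChain_cons_cons.mp hch).2
    have h1 := IH t hch'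
    rw [List.map_cons, cost_cons, cost_cons]
    have hstep : costStep (decide (x % 2 = 1)) x t +
        costStep (decide ((x + 1) % 2 = 1)) (x + 1) (t + 1) ≤ 2 := by
      rcases Nat.mod_two_eq_zero_or_one x with hx | hx <;>
        rcases Nat.mod_two_eq_zero_or_one t with ht | ht <;>
        simp [costStep, Nat.add_mod, hx, ht] <;> split_ifs <;> omega
    have e2 : (t + 1) % 2 = 1 ↔ t % 2 = 0 := by omega
    simp only [List.length_cons]
    have e3 : decide ((t + 1) % 2 = 1) = !decide (t % 2 = 1) := by
      rcases Nat.mod_two_eq_zero_or_one t with ht | ht <;> simp [ht] <;> omega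
    linarith [h1, hstep]

lemma cost_top (u : List Nat) (x : Nat) (hch : List.Chain' (· ≠ ·) (x :: u)) (hx1 : 1 ≤ x) :
    cost true 0 (x :: u) + cost true 0 ((x :: u).map (· + 1)) + 1 ≤ 2 * (x :: u).length := by
  have h1 := cost_sum 0 u x hch
  rw [List.map_cons]
  rcases Nat.mod_two_eq_zero_or_one x with hx | hx
  · have e1 : cost true 0 (x :: u) = 1 + cost false x u := by simp [cost, hx]
    have hxo : (x + 1) % 2 = 1 := by omega
    have e2 : cost true 0 ((x + 1) :: u.map (· + 1)) = cost true (x + 1) (u.map (· + 1)) := by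
      simp [cost, hxo]
    rw [e1, e2]
    have b1 : decide (x % 2 = 1) = false := by simp [hx]
    have b2 : decide ((x + 1) % 2 = 1) = true := by simp [hxo]
    rw [b1, b2] at h1
    simp only [List.length_cons]
    linarith
  · have e1 : cost true 0 (x :: u) = cost true x u := by
      simp [cost, hx, show 0 < x by omega]
    have hxo : (x + 1) % 2 = 0 := by omega
    have e2 : cost true 0 ((x + 1) :: u.map (· + 1)) = 1 + cost false (x + 1) (u.map (· + 1)) := by
      simp [cost, hxo]
    rw [e1, e2]
    have b1 : decide (x % 2 = 1) = true := by simp [hx]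
    have b2 : decide ((x + 1) % 2 = 1) = false := by simp [hxo]
    rw [b1, b2] at h1
    simp only [List.length_cons]
    linarith

lemma zz_succ_true (B n : Nat) (hn : 1 ≤ n) : zz B n true = ascRun B ++ zz B (n - 1) false := by
  obtain ⟨m, rfl⟩ : ∃ m, n = m + 1 := ⟨n - 1, by omega⟩
  simp [zz]

lemma embed_zigzag (B : Nat) (u : List Nat) (hne : u ≠ [])
    (hch : List.Chain' (· ≠ ·) u) (hbnd : ∀ x ∈ u, 1 ≤ x ∧ x + 1 ≤ B) :
    ∃ δ, δ ≤ 1 ∧ (u.map (· + δ)) <+ zigzag B u.length := by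
  obtain ⟨x, u', rfl⟩ : ∃ x u', u = x :: u' := by
    cases u with
    | nil => exact absurd rfl hne
    | cons a l => exact ⟨a, l, rfl⟩
  have hx1 : 1 ≤ x := (hbnd x (by simp)).1
  have htop := cost_top u' x hch hx1
  have hn : 1 ≤ (x :: u').length := by simp
  have hfin : ∀ δ, δ ≤ 1 → cost true 0 ((x :: u').map (· + δ)) ≤ (x :: u').length - 1 →
      ((x :: u').map (· + δ)) <+ zigzag B (x :: u').length := by
    intro δ hδ hc
    have hbnd' : ∀ t ∈ (x :: u').map (· + δ), 1 ≤ t ∧ t ≤ B := by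
      intro t ht
      obtain ⟨a, ha, rfl⟩ := List.mem_map.mp ht
      obtain ⟨ha1, ha2⟩ := hbnd a ha
      omega
    have h2 := embed B _ true 0 ((x :: u').length - 1) hbnd' hc
    simp only [if_pos rfl, Bool.not_true] at h2
    rw [oddsGT_zero] at h2
    rw [zigzag_eq_zz, zz_succ_true B _ hn]
    simpa using h2
  rcases Nat.lt_or_ge (cost true 0 (x :: u')) (x :: u').length with h | h
  · refine ⟨0, by omega, hfin 0 (by omega) ?_⟩
    have e : (x :: u').map (· + 0) = x :: u' := by simp
    rw [e]; omega
  · refine ⟨1, le_rfl, hfin 1 le_rfl ?_⟩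
    simp only [List.length_cons] at htop h ⊢
    omega

end ZetaAux

/-- If a permutation of length n has a distant inverse-descent, then ζₙ contains a
subsequence order-isomorphic to it. -/
theorem zeta_contains_perms_with_distant_inverse_descent (n : Nat) (p z : List Nat)
    (hperm : IsPermWord n p) (hdesc : HasDistantInvDesc p) (hzeta : IsZeta n z) :
    ∃ u : List Nat, List.Sublist u z ∧ OrdIso u p := by
  obtain ⟨hplen, hpnodup, hpbnd⟩ := hperm
  obtain ⟨j, k, hjk, hkn, hpj⟩ := hdesc
  rw [hplen] at hkn
  have hn3 : 3 ≤ n := by omega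
  have hinj : ∀ s t, s < n → t < n → p.getD s 0 = p.getD t 0 → s = t := by
    intro s t hs ht h
    rw [List.getD_eq_getElem p 0 (show s < p.length by omega),
      List.getD_eq_getElem p 0 (show t < p.length by omega)] at h
    exact hpnodup.getElem_inj_iff.mp h
  have hpb : ∀ s, s < n → 1 ≤ p.getD s 0 ∧ p.getD s 0 ≤ n := by
    intro s hs
    apply hpbnd
    rw [List.getD_eq_getElem p 0 (show s < p.length by omega)]
    exact List.getElem_mem _
  set v := p.getD k 0 with hv
  have hv1 : 1 ≤ v := (hpb k (by omega)).1
  have hvn : v + 1 ≤ n := by have := (hpb j (by omega)).2; omega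
  set f : Nat → Nat := fun t => if t ≤ v then t else t - 1 with hf
  have hcol : ∀ a b, 1 ≤ a → 1 ≤ b → f a = f b →
      a = b ∨ (a = v ∧ b = v + 1) ∨ (a = v + 1 ∧ b = v) := by
    intro a b ha hb h
    simp only [hf] at h
    split_ifs at h <;> omega
  have hmono : ∀ a b, f a < f b → a < b := by
    intro a b h
    simp only [hf] at h
    split_ifs at h <;> omega
  have hocc : ∀ s, s < n → (p.getD s 0 = v → s = k) ∧ (p.getD s 0 = v + 1 → s = j) := by
    intro s hs
    refine ⟨fun h => hinj s k hs (by omega) (by rw [h]),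
      fun h => hinj s j hs (by omega) (by rw [h, hpj])⟩
  set w := p.map f with hw
  have hwlen : w.length = n := by simp [hw, hplen]
  have hwget : ∀ i, i < n → w.getD i 0 = f (p.getD i 0) := by
    intro i hi
    rw [hw, List.getD_eq_getElem _ 0 (show i < (p.map f).length by simp [hplen]; omega),
      List.getElem_map, List.getD_eq_getElem p 0 (show i < p.length by omega)]
  have hwbnd : ∀ x ∈ w, 1 ≤ x ∧ x + 1 ≤ n := by
    intro x hx
    obtain ⟨t, ht, rfl⟩ := List.mem_map.mp hx
    obtain ⟨ht1, ht2⟩ := hpbnd t ht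
    simp only [hf]
    split_ifs <;> omega
  have hadj : ∀ i, i + 1 < n → w.getD i 0 ≠ w.getD (i + 1) 0 := by
    intro i hi heq
    rw [hwget i (by omega), hwget (i + 1) (by omega)] at heq
    have h1 := (hpb i (by omega)).1
    have h2 := (hpb (i + 1) (by omega)).1
    rcases hcol _ _ h1 h2 heq with h | ⟨ha, hb⟩ | ⟨ha, hb⟩
    · exact absurd (hinj i (i + 1) (by omega) (by omega) h) (by omega)
    · have e1 := (hocc i (by omega)).1 ha
      have e2 := (hocc (i + 1) (by omega)).2 hb
      omega
    · have e1 := (hocc i (by omega)).2 ha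
      have e2 := (hocc (i + 1) (by omega)).1 hb
      omega
  have hchain : List.Chain' (· ≠ ·) w := by
    rw [show List.Chain' (· ≠ ·) w ↔ List.IsChain (· ≠ ·) w from Iff.rfl, List.isChain_iff_getElem]
    intro i hi
    rw [hwlen] at hi
    intro heq
    apply hadj i (by omega)
    rw [List.getD_eq_getElem w 0 (show i < w.length by omega),
      List.getD_eq_getElem w 0 (show i + 1 < w.length by omega)]
    simpa using heq
  have hne : w ≠ [] := by
    intro h
    rw [h] at hwlen
    simp at hwlen
    omega
  obtain ⟨δ, hδ, hsub⟩ := ZetaAux.embed_zigzag n w hne hchain hwbnd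
  rw [hwlen] at hsub
  set w' := w.map (· + δ) with hw'
  have hw'len : w'.length = n := by simp [hw', hwlen]
  have hw'get : ∀ i, i < n → w'.getD i 0 = w.getD i 0 + δ := by
    intro i hi
    rw [hw', List.getD_eq_getElem _ 0
        (show i < (w.map (· + δ)).length by simp [hwlen]; omega),
      List.getElem_map, List.getD_eq_getElem w 0 (show i < w.length by omega)]
  have hsub' : List.Sublist w' (zWord n) := hsub
  obtain ⟨emb, hemb⟩ := List.sublist_iff_exists_fin_orderEmbedding_get_eq.mp hsub'
  obtain ⟨⟨hzlen, hznodup, hzbnd⟩, hzcmp⟩ := hzeta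
  set fn : Fin w'.length → Nat := fun i => z.getD (emb i).val 0 with hfn
  have hulen : (List.ofFn fn).length = n := by rw [List.length_ofFn, hw'len]
  have huget : ∀ (i : Nat) (hi : i < w'.length),
      (List.ofFn fn).getD i 0 = z.getD (emb ⟨i, hi⟩).val 0 := by
    intro i hi
    rw [List.getD_eq_getElem _ 0 (show i < (List.ofFn fn).length by
      rw [List.length_ofFn]; omega), List.getElem_ofFn]
  have husub : List.Sublist (List.ofFn fn) z := by
    apply List.sublist_iff_exists_fin_orderEmbedding_get_eq.mpr
    have hc1 : (List.ofFn fn).length = w'.length := by rw [hulen, hw'len]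
    have hc2 : (zWord n).length = z.length := hzlen.symm
    refine ⟨OrderEmbedding.ofStrictMono
      (fun i => Fin.cast hc2 (emb (Fin.cast hc1 i))) (show StrictMono _ from ?_), ?_⟩
    · intro a b hab
      exact emb.strictMono hab
    · intro ix
      simp only [OrderEmbedding.coe_ofStrictMono]
      rw [List.get_eq_getElem, List.get_eq_getElem, List.getElem_ofFn]
      rw [← List.getD_eq_getElem z 0
        (show (Fin.cast hc2 (emb (Fin.cast hc1 ix))).val < z.length from
          (Fin.cast hc2 (emb (Fin.cast hc1 ix))).isLt)]
      rfl
  have hzw : ∀ (i : Nat) (hi : i < w'.length),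
      (zWord n).getD (emb ⟨i, hi⟩).val 0 = f (p.getD i 0) + δ := by
    intro i hi
    have hin : i < n := by omega
    have h1 := hemb ⟨i, hi⟩
    rw [List.get_eq_getElem, List.get_eq_getElem] at h1
    have h2 : w'.getD i 0 = f (p.getD i 0) + δ := by rw [hw'get i hin, hwget i hin]
    rw [List.getD_eq_getElem w' 0 (show i < w'.length by omega)] at h2
    rw [List.getD_eq_getElem (zWord n) 0 ((emb _).isLt), ← h2]
    exact h1.symm
  have key : ∀ s t, s < t → t < n →
      ((List.ofFn fn).getD s 0 < (List.ofFn fn).getD t 0 ↔ p.getD s 0 < p.getD t 0) ∧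
      ((List.ofFn fn).getD t 0 < (List.ofFn fn).getD s 0 ↔ p.getD t 0 < p.getD s 0) := by
    intro s t hst htn
    have hsn : s < n := by omega
    have hs' : s < w'.length := by omega
    have ht' : t < w'.length := by omega
    have hab : (emb ⟨s, hs'⟩).val < (emb ⟨t, ht'⟩).val := by
      exact emb.strictMono (show (⟨s, hs'⟩ : Fin w'.length) < ⟨t, ht'⟩ by
        simp [Fin.lt_def, hst])
    have hbL : (emb (⟨t, ht'⟩ : Fin w'.length)).val < (zWord n).length := (emb _).isLt
    have hcz := hzcmp (emb ⟨s, hs'⟩).val (emb ⟨t, ht'⟩).val hab hbL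
    rw [hzw s hs', hzw t ht'] at hcz
    rw [huget s hs', huget t ht']
    have hps := (hpb s hsn).1
    have hpt := (hpb t htn).1
    rcases lt_trichotomy (f (p.getD s 0)) (f (p.getD t 0)) with h | h | h
    · have hz1 := hcz.1 (by omega)
      have hp1 : p.getD s 0 < p.getD t 0 := hmono _ _ h
      constructor <;> constructor <;> intro <;> omega
    · have hz2 := hcz.2 (by omega)
      have hne' : p.getD s 0 ≠ p.getD t 0 := fun hcon => by
        have := hinj s t hsn htn hcon; omega
      rcases hcol _ _ hps hpt h with hcc | ⟨ha, hb⟩ | ⟨ha, hb⟩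
      · exact absurd hcc hne'
      · have e1 := (hocc s hsn).1 ha
        have e2 := (hocc t htn).2 hb
        omega
      · have hp1 : p.getD t 0 < p.getD s 0 := by omega
        constructor <;> constructor <;> intro <;> omega
    · have hz2 := hcz.2 (by omega)
      have hp1 : p.getD t 0 < p.getD s 0 := hmono _ _ h
      constructor <;> constructor <;> intro <;> omega
  refine ⟨List.ofFn fn, husub, ?_, ?_⟩
  · rw [hulen, hplen]
  · intro s t hs ht
    rw [hulen] at hs ht
    rcases lt_trichotomy s t with h | h | h
    · exact (key s t h ht).1
    · subst h
      constructor <;> intro hcon <;> exact absurd hcon (lt_irrefl _)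
    · exact (key t s h hs).2
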